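/- Let M be an involution on a measurable space X, p a probability density, and r : ℝ₊ → [0,1] a function satisfying x·r(1/x) = r(x). Suppose M is measure-preserving with Jacobian 1 (or X discrete). Then the involutive Metropolis–Hastings kernel t(x'|x) = δ(x' − Mx) r(p(Mx)/p(x)) + δ(x' − x)(1 − r(p(Mx)/p(x))) satisfies detailed balance: t(x'|x) p(x) = t(x|x') p(x') for all x, x'. -/
import Mathlib


/-- On a discrete space, the involutive Metropolis–Hastings kernel
`t(x'|x) = δ(x' - Mx) r(p(Mx)/p(x)) + δ(x'-x)(1 - r(p(Mx)/p(x)))`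
satisfies detailed balance with respect to `p`. -/
theorem stmt5 {X : Type*} [DecidableEq X] (M : X → X) (hM : ∀ x, M (M x) = x)
    (p : X → ℝ) (hp : ∀ x, 0 < p x)
    (r : ℝ → ℝ) (hr01 : ∀ u > 0, 0 ≤ r u ∧ r u ≤ 1)
    (hrsym : ∀ u > 0, u * r (1 / u) = r u) :
    let t : X → X → ℝ := fun x x' =>
      (if x' = M x then r (p (M x) / p x) else 0) +
      (if x' = x then 1 - r (p (M x) / p x) else 0)
    ∀ x x', t x x' * p x = t x' x * p x' := by
  intro t x x'
  -- key symmetry: r(p(Mx)/p x) * p x = r(p x / p(Mx)) * p (M x)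
  have key : ∀ a : X, r (p (M a) / p a) * p a = r (p a / p (M a)) * p (M a) := by
    intro a
    have hu : (0:ℝ) < p (M a) / p a := div_pos (hp _) (hp _)
    have h := hrsym _ hu
    rw [one_div_div] at h
    rw [← h, div_mul_eq_mul_div, div_mul_cancel₀ _ (hp a).ne', mul_comm]
  simp only [t]
  by_cases h1 : x' = M x
  · subst h1
    by_cases h2 : M x = x
    · simp [h2]
    · have h3 : x ≠ M x := fun h => h2 h.symm
      simp only [if_pos rfl, hM, if_neg h2, if_neg h3, add_zero, zero_add]
      exact key x
  · by_cases h2 : x' = x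
    · subst h2; simp
    · have h4 : x ≠ M x' := by
        intro h
        exact h1 (by rw [h, hM])
      rw [if_neg h1, if_neg h2, if_neg h4, if_neg (fun h => h2 h.symm)]
      ring
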